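/- Let Re > 0, let u : ℝ × ℝ³ → ℝ³ be twice continuously differentiable (jointly in (t,x)) and let p̃ : ℝ × ℝ³ → ℝ be continuously differentiable. Suppose that for all t ∈ ℝ and x ∈ Ω = [0,1]³ the unforced Lamb-form Navier–Stokes equations hold: ∂ₜu − u × (curl u) + Re⁻¹ curl(curl u) + ∇(½|u|² + p̃) = 0 and div u = 0, together with the boundary conditions u × n = 0 and ½|u|² + p̃ = 0 on ∂Ω for all t. Then for every T ≥ 0 the energy balance equality holds: ½ ∫_Ω |u(T,x)|² dx + Re⁻¹ ∫₀ᵀ ( ∫_Ω |curl u(t,·)(x)|² dx ) dt = ½ ∫_Ω |u(0,x)|² dx; in particular ∫_Ω |u(T,x)|² dx ≤ ∫_Ω |u(0,x)|² dx for all T ≥ 0. -/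

import Mathlib

open MeasureTheory

noncomputable section

/-- Points of ℝ³, represented as functions `Fin 3 → ℝ`. -/
abbrev R3 : Type := Fin 3 → ℝ

/-- Partial derivative in the `i`-th coordinate direction. -/
noncomputable def pd (i : Fin 3) (f : R3 → ℝ) (x : R3) : ℝ :=
  fderiv ℝ f x (Pi.single i 1)

/-- Curl of a vector field on ℝ³. -/
noncomputable def vcurl (v : R3 → R3) (x : R3) : R3 :=
  ![pd 1 (fun y => v y 2) x - pd 2 (fun y => v y 1) x,
    pd 2 (fun y => v y 0) x - pd 0 (fun y => v y 2) x,
    pd 0 (fun y => v y 1) x - pd 1 (fun y => v y 0) x]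

/-- Divergence of a vector field on ℝ³. -/
noncomputable def vdiv (v : R3 → R3) (x : R3) : ℝ :=
  pd 0 (fun y => v y 0) x + pd 1 (fun y => v y 1) x + pd 2 (fun y => v y 2) x

/-- Gradient of a scalar field on ℝ³. -/
noncomputable def vgrad (f : R3 → ℝ) (x : R3) : R3 := fun i => pd i f x

/-- Euclidean dot product on ℝ³. -/
def dot3 (a b : R3) : ℝ := a 0 * b 0 + a 1 * b 1 + a 2 * b 2

/-- Cross product on ℝ³. -/
def cross3 (a b : R3) : R3 :=
  ![a 1 * b 2 - a 2 * b 1, a 2 * b 0 - a 0 * b 2, a 0 * b 1 - a 1 * b 0]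

/-- The closed unit cube Ω = [0,1]³. -/
def cube : Set R3 := Set.Icc 0 1

/-- `x` lies on one of the two faces of the cube orthogonal to direction `i`. -/
def onFace (x : R3) (i : Fin 3) : Prop := x i = 0 ∨ x i = 1

/-- `x` lies on the boundary ∂Ω of the cube. -/
def onBdry (x : R3) : Prop := x ∈ cube ∧ ∃ i : Fin 3, onFace x i

/-- Tangential boundary condition `v × n = 0` on ∂Ω: on each face of the cube
the two components of `v` tangential to that face vanish. -/
def TangentialBC (v : R3 → R3) : Prop :=
  ∀ x ∈ cube, ∀ i : Fin 3, onFace x i → ∀ j : Fin 3, j ≠ i → v x j = 0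

/-- Normal boundary condition `v · n = 0` on ∂Ω: on each face of the cube
the component of `v` normal to that face vanishes. -/
def NormalBC (v : R3 → R3) : Prop :=
  ∀ x ∈ cube, ∀ i : Fin 3, onFace x i → v x i = 0

/-- Time derivative ∂ₜu of a time-dependent vector field. -/
noncomputable def dtv (u : ℝ → R3 → R3) (t : ℝ) (x : R3) : R3 :=
  fun i => deriv (fun s => u s x i) t

/-!
Dotting the momentum equation with `u` kills the Lamb term `u × curl u`. With
`P = ½|u|² + p̃`, the identities `div (u × curl u) = |curl u|² - u · curl curl u` and
`div (P u) = ∇P · u + P div u` turn the viscous and pressure terms into `Re⁻¹ |curl u|²`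
plus divergences, since `div u = 0`. By the boundary conditions the normal components of
`u × curl u` and of `P u` vanish on ∂Ω, so the divergence theorem gives
`d/dt ∫|u|² = -2 Re⁻¹ ∫|curl u|²`, and the balance follows by integrating in time.
-/

open Function Set

lemma ContDiff.uncurry_left {𝕜 E F G : Type*} [NontriviallyNormedField 𝕜]
    [NormedAddCommGroup E] [NormedSpace 𝕜 E] [NormedAddCommGroup F] [NormedSpace 𝕜 F]
    [NormedAddCommGroup G] [NormedSpace 𝕜 G] {n : WithTop ℕ∞} {f : E → F → G}
    (hf : ContDiff 𝕜 n (uncurry f)) (x : E) : ContDiff 𝕜 n (f x) :=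
  hf.comp (contDiff_prodMk_right x)

theorem hasDerivAt_setIntegral_of_continuous {X E : Type*} [TopologicalSpace X] [T2Space X]
    [MeasurableSpace X] [OpensMeasurableSpace X] [NormedAddCommGroup E] [NormedSpace ℝ E]
    [SecondCountableTopologyEither X E] {μ : Measure X} [IsFiniteMeasureOnCompacts μ]
    {K : Set X} (hK : IsCompact K) {f f' : ℝ → X → E} (hf : Continuous (uncurry f))
    (hf' : Continuous (uncurry f')) (hd : ∀ t x, HasDerivAt (f · x) (f' t x) t) (t₀ : ℝ) :
    HasDerivAt (fun t => ∫ x in K, f t x ∂μ) (∫ x in K, f' t₀ x ∂μ) t₀ := by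
  obtain ⟨C, hC⟩ := ((isCompact_Icc (a := t₀ - 1) (b := t₀ + 1)).prod hK)
    |>.exists_bound_of_continuousOn hf'.continuousOn
  refine (hasDerivAt_integral_of_dominated_loc_of_deriv_le (bound := fun _ => C)
    (Icc_mem_nhds (sub_one_lt t₀) (lt_add_one t₀))
    (.of_forall fun t => (hf.uncurry_left t).aestronglyMeasurable)
    ((hf.uncurry_left t₀).continuousOn.integrableOn_compact hK)
    (hf'.uncurry_left t₀).aestronglyMeasurable ?_ (integrableOn_const hK.measure_ne_top)
    (.of_forall fun x t _ => hd t x)).2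
  filter_upwards [ae_restrict_mem hK.measurableSet] with x hx t ht
  exact hC (t, x) ⟨ht, hx⟩

lemma pd_sub {f g : R3 → ℝ} {x : R3} (hf : DifferentiableAt ℝ f x)
    (hg : DifferentiableAt ℝ g x) (i : Fin 3) :
    pd i (fun y => f y - g y) x = pd i f x - pd i g x := by
  simp [pd, fderiv_fun_sub hf hg]

lemma pd_mul {f g : R3 → ℝ} {x : R3} (hf : DifferentiableAt ℝ f x)
    (hg : DifferentiableAt ℝ g x) (i : Fin 3) :
    pd i (fun y => f y * g y) x = pd i f x * g x + f x * pd i g x := by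
  simp only [pd, fderiv_fun_mul hf hg, add_apply, smul_apply, smul_eq_mul]
  ring

lemma pd_apply_eq_fderiv {v : R3 → R3} {x : R3} (hv : DifferentiableAt ℝ v x) (j k : Fin 3) :
    pd j (fun y => v y k) x = fderiv ℝ v x (Pi.single j 1) k := by
  rw [pd, (hasFDerivAt_pi'.1 hv.hasFDerivAt k).fderiv]
  rfl

lemma vdiv_cross3 {a b : R3 → R3} {x : R3} (ha : DifferentiableAt ℝ a x)
    (hb : DifferentiableAt ℝ b x) :
    vdiv (fun y => cross3 (a y) (b y)) x = dot3 (b x) (vcurl a x) - dot3 (a x) (vcurl b x) := by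
  simp only [vdiv, cross3, Matrix.cons_val_zero, Matrix.cons_val_one, Matrix.cons_val_two,
    Matrix.head_cons, Matrix.tail_cons]
  simp (disch := fun_prop) only [pd_sub, pd_mul]
  simp only [vcurl, dot3, Matrix.cons_val_zero, Matrix.cons_val_one, Matrix.cons_val_two,
    Matrix.head_cons, Matrix.tail_cons]
  ring

lemma vdiv_smul {p : R3 → ℝ} {v : R3 → R3} {x : R3} (hp : DifferentiableAt ℝ p x)
    (hv : DifferentiableAt ℝ v x) :
    vdiv (fun y => p y • v y) x = dot3 (vgrad p x) (v x) + p x * vdiv v x := by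
  simp only [vdiv, Pi.smul_apply, smul_eq_mul]
  simp (disch := fun_prop) only [pd_mul]
  simp only [vgrad, dot3]
  ring

section Regularity

variable {m n : WithTop ℕ∞}

lemma ContDiff.pd {f : R3 → ℝ} (hf : ContDiff ℝ n f) (hmn : m + 1 ≤ n) (i : Fin 3) :
    ContDiff ℝ m (pd i f) :=
  (hf.fderiv_right hmn).clm_apply contDiff_const

lemma ContDiff.vdiv {F : R3 → R3} (hF : ContDiff ℝ n F) (hmn : m + 1 ≤ n) :
    ContDiff ℝ m (vdiv F) :=
  have hF := contDiff_pi.1 hF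
  (((hF 0).pd hmn 0).add ((hF 1).pd hmn 1)).add ((hF 2).pd hmn 2)

lemma ContDiff.vcurl {v : R3 → R3} (hv : ContDiff ℝ n v) (hmn : m + 1 ≤ n) :
    ContDiff ℝ m (vcurl v) := by
  have hv := contDiff_pi.1 hv
  refine contDiff_pi.2 fun i => ?_
  fin_cases i
  · exact ((hv 2).pd hmn 1).sub ((hv 1).pd hmn 2)
  · exact ((hv 0).pd hmn 2).sub ((hv 2).pd hmn 0)
  · exact ((hv 1).pd hmn 0).sub ((hv 0).pd hmn 1)

lemma ContDiff.cross3 {a b : R3 → R3} (ha : ContDiff ℝ n a)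
    (hb : ContDiff ℝ n b) : ContDiff ℝ n fun y => cross3 (a y) (b y) := by
  have ha := contDiff_pi.1 ha
  have hb := contDiff_pi.1 hb
  refine contDiff_pi.2 fun i => ?_
  fin_cases i <;>
    simp only [_root_.cross3, Fin.zero_eta, Fin.mk_one, Fin.reduceFinMk, Matrix.cons_val,
      Matrix.cons_val_zero, Matrix.cons_val_one] <;>
    fun_prop

@[fun_prop]
lemma ContDiff.dot3 {a b : R3 → R3} (ha : ContDiff ℝ n a)
    (hb : ContDiff ℝ n b) : ContDiff ℝ n fun y => dot3 (a y) (b y) := by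
  have ha := contDiff_pi.1 ha
  have hb := contDiff_pi.1 hb
  simp only [_root_.dot3]
  fun_prop

end Regularity

lemma dot3_self_nonneg (a : R3) : 0 ≤ dot3 a a :=
  add_nonneg (add_nonneg (mul_self_nonneg _) (mul_self_nonneg _)) (mul_self_nonneg _)

@[fun_prop]
lemma Continuous.dot3 {α : Type*} [TopologicalSpace α] {a b : α → R3} (ha : Continuous a)
    (hb : Continuous b) : Continuous fun p => dot3 (a p) (b p) := by
  have ha := continuous_pi_iff.1 ha
  have hb := continuous_pi_iff.1 hb
  simp only [_root_.dot3]
  fun_prop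

lemma HasDerivAt.dot3_self {a : ℝ → R3} {a' : R3} {t : ℝ} (ha : HasDerivAt a a' t) :
    HasDerivAt (fun s => dot3 (a s) (a s)) (2 * dot3 (a t) a') t := by
  have ha := hasDerivAt_pi.1 ha
  simp only [dot3]
  refine ((((ha 0).mul (ha 0)).add ((ha 1).mul (ha 1))).add ((ha 2).mul (ha 2))).congr_deriv ?_
  ring

lemma isCompact_cube : IsCompact cube := isCompact_Icc

theorem integral_vdiv_eq_zero_of_normalBC {F : R3 → R3} (hF : ContDiff ℝ 1 F)
    (hbc : NormalBC F) : ∫ x in cube, vdiv F x = 0 := by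
  have hFi := contDiff_pi.1 hF
  have hdiv : vdiv F = fun x => ∑ i, fderiv ℝ (fun y => F y i) x (Pi.single i 1) := by
    ext x
    simp [vdiv, pd, Fin.sum_univ_three]
  rw [cube, hdiv, integral_divergence_of_hasFDerivAt_off_countable' (0 : R3) 1 zero_le_one
    (fun i y => F y i) _ ∅ countable_empty (fun i => (hFi i).continuous.continuousOn)
    (fun x _ i => ((hFi i).differentiable one_ne_zero x).hasFDerivAt)
    (by
      rw [← hdiv]
      exact (hF.vdiv (m := 0) (by norm_num)).continuous.continuousOn.integrableOn_compact
        isCompact_cube)]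
  refine Finset.sum_eq_zero fun i _ => ?_
  have hface : ∀ c : ℝ, (c = 0 ∨ c = 1) →
      ∫ y in Icc ((0 : R3) ∘ i.succAbove) ((1 : R3) ∘ i.succAbove),
        F (i.insertNth c y) i = 0 := by
    intro c hc
    refine setIntegral_eq_zero_of_forall_eq_zero fun y hy => hbc _ ?_ i (by simpa [onFace])
    rw [cube, Fin.insertNth_mem_Icc]
    exact ⟨by rcases hc with rfl | rfl <;> norm_num, hy⟩
  simp only [Pi.zero_apply, Pi.one_apply]
  rw [hface 1 (.inr rfl), hface 0 (.inl rfl), sub_zero]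

lemma TangentialBC.normalBC_cross3 {v : R3 → R3} (hv : TangentialBC v) (w : R3 → R3) :
    NormalBC fun y => cross3 (v y) (w y) := by
  intro x hx i hi
  have := hv x hx i hi
  fin_cases i <;> simp [cross3, this 0, this 1, this 2]

lemma normalBC_smul {p : R3 → ℝ} (hp : ∀ x, onBdry x → p x = 0) (v : R3 → R3) :
    NormalBC fun y => p y • v y := by
  intro x hx i hi
  simp [hp x ⟨hx, i, hi⟩]

lemma dot3_cross3_curl_sub_eq (ν : ℝ) {v : R3 → R3} {P : R3 → ℝ} {x : R3}
    (hv : DifferentiableAt ℝ v x) (hω : DifferentiableAt ℝ (vcurl v) x)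
    (hP : DifferentiableAt ℝ P x) :
    dot3 (v x) (cross3 (v x) (vcurl v x) - ν • vcurl (vcurl v) x - vgrad P x)
      = ν * (vdiv (fun y => cross3 (v y) (vcurl v y)) x - dot3 (vcurl v x) (vcurl v x))
        - vdiv (fun y => P y • v y) x + P x * vdiv v x := by
  rw [vdiv_cross3 hv hω, vdiv_smul hP hv]
  simp only [dot3, cross3, Pi.sub_apply, Pi.smul_apply, smul_eq_mul, Matrix.cons_val_zero,
    Matrix.cons_val_one, Matrix.cons_val_two, Matrix.head_cons, Matrix.tail_cons]
  ring

theorem integral_dot3_cross3_curl_sub_eq (ν : ℝ) {v : R3 → R3} {P : R3 → ℝ}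
    (hv : ContDiff ℝ 2 v) (hP : ContDiff ℝ 1 P) (hdiv : ∀ x ∈ cube, vdiv v x = 0)
    (hv_bc : TangentialBC v) (hP_bc : ∀ x, onBdry x → P x = 0) :
    ∫ x in cube, dot3 (v x) (cross3 (v x) (vcurl v x) - ν • vcurl (vcurl v) x - vgrad P x)
      = -ν * ∫ x in cube, dot3 (vcurl v x) (vcurl v x) := by
  have hv₁ : ContDiff ℝ 1 v := hv.of_le one_le_two
  have hω : ContDiff ℝ 1 (vcurl v) := hv.vcurl (by norm_num)
  have hF₁ : ContDiff ℝ 1 fun y => cross3 (v y) (vcurl v y) := hv₁.cross3 hω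
  have hF₂ : ContDiff ℝ 1 fun y => P y • v y := hP.smul hv₁
  have hint {g : R3 → ℝ} (hg : Continuous g) : Integrable g (volume.restrict cube) :=
    hg.continuousOn.integrableOn_compact isCompact_cube
  have hdiv₁ := hint (hF₁.vdiv (m := 0) (by norm_num)).continuous
  have hdiv₂ := hint (hF₂.vdiv (m := 0) (by norm_num)).continuous
  have hω₂ := hint (hω.dot3 hω).continuous
  calc _ = ∫ x in cube, ν * (vdiv (fun y => cross3 (v y) (vcurl v y)) x
          - dot3 (vcurl v x) (vcurl v x)) - vdiv (fun y => P y • v y) x := by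
        refine setIntegral_congr_fun isCompact_cube.measurableSet fun x hx => ?_
        rw [dot3_cross3_curl_sub_eq ν (hv₁.differentiable one_ne_zero x)
          (hω.differentiable one_ne_zero x) (hP.differentiable one_ne_zero x), hdiv x hx,
          mul_zero, add_zero]
    _ = ν * ((∫ x in cube, vdiv (fun y => cross3 (v y) (vcurl v y)) x)
          - ∫ x in cube, dot3 (vcurl v x) (vcurl v x))
          - ∫ x in cube, vdiv (fun y => P y • v y) x := by
        rw [integral_sub ?_ hdiv₂, integral_const_mul, integral_sub hdiv₁ hω₂]
        exact (hdiv₁.sub hω₂).const_mul ν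
    _ = _ := by
        rw [integral_vdiv_eq_zero_of_normalBC hF₁ (hv_bc.normalBC_cross3 _),
          integral_vdiv_eq_zero_of_normalBC hF₂ (normalBC_smul hP_bc v)]
        ring

section TimeDependent

variable {u : ℝ → R3 → R3}

lemma hasDerivAt_dtv (hu : Differentiable ℝ (uncurry u)) (t : ℝ) (x : R3) :
    HasDerivAt (fun s => u s x) (dtv u t x) t :=
  hasDerivAt_pi.2 fun i =>
    (differentiable_pi.1 (hu.comp (differentiable_id.prodMk (differentiable_const x))) i
      t).hasDerivAt

lemma dtv_eq_fderiv (hu : Differentiable ℝ (uncurry u)) (t : ℝ) (x : R3) :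
    dtv u t x = fderiv ℝ (uncurry u) (t, x) (1, 0) := by
  have hline : HasDerivAt (fun s => (s, x)) ((1 : ℝ), (0 : R3)) t :=
    (hasDerivAt_id t).prodMk (hasDerivAt_const t x)
  have h : HasDerivAt (uncurry u ∘ fun s => (s, x)) (fderiv ℝ (uncurry u) (t, x) (1, 0)) t :=
    (hu (t, x)).hasFDerivAt.comp_hasDerivAt t hline
  exact (hasDerivAt_dtv hu t x).unique h

lemma pd_slice_eq_fderiv (hu : Differentiable ℝ (uncurry u)) (t : ℝ) (x : R3) (j k : Fin 3) :
    pd j (fun y => u t y k) x = fderiv ℝ (uncurry u) (t, x) (0, Pi.single j 1) k := by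
  have hslice : HasFDerivAt (u t)
      ((fderiv ℝ (uncurry u) (t, x)).comp (ContinuousLinearMap.inr ℝ ℝ R3)) x :=
    (hu (t, x)).hasFDerivAt.comp x (hasFDerivAt_prodMk_right t x)
  rw [pd_apply_eq_fderiv hslice.differentiableAt, hslice.fderiv]
  rfl

lemma continuous_dtv (hu : ContDiff ℝ 1 (uncurry u)) :
    Continuous fun p : ℝ × R3 => dtv u p.1 p.2 := by
  simp_rw [dtv_eq_fderiv (hu.differentiable one_ne_zero)]
  have := hu.continuous_fderiv one_ne_zero
  fun_prop

lemma continuous_vcurl_slice (hu : ContDiff ℝ 1 (uncurry u)) :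
    Continuous fun p : ℝ × R3 => vcurl (u p.1) p.2 := by
  have hpd (j k : Fin 3) : Continuous fun p : ℝ × R3 => pd j (fun y => u p.1 y k) p.2 := by
    simp_rw [pd_slice_eq_fderiv (hu.differentiable one_ne_zero)]
    have := hu.continuous_fderiv one_ne_zero
    fun_prop
  refine continuous_pi fun i => ?_
  fin_cases i
  · exact (hpd 1 2).sub (hpd 2 1)
  · exact (hpd 2 0).sub (hpd 0 2)
  · exact (hpd 0 1).sub (hpd 1 0)

lemma hasDerivAt_integral_dot3_self (hu : ContDiff ℝ 1 (uncurry u)) {K : Set R3}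
    (hK : IsCompact K) (t : ℝ) :
    HasDerivAt (fun t => ∫ x in K, dot3 (u t x) (u t x))
      (2 * ∫ x in K, dot3 (u t x) (dtv u t x)) t := by
  rw [← integral_const_mul]
  exact hasDerivAt_setIntegral_of_continuous (μ := volume) hK
    (f := fun t x => dot3 (u t x) (u t x)) (f' := fun t x => 2 * dot3 (u t x) (dtv u t x))
    (hu.continuous.dot3 hu.continuous)
    (continuous_const.fun_mul (hu.continuous.dot3 (continuous_dtv hu)))
    (fun t x => (hasDerivAt_dtv (hu.differentiable one_ne_zero) t x).dot3_self) t

end TimeDependent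

/-- Energy balance (energy-norm stability) for the unforced Lamb-form
Navier–Stokes equations on the unit cube: for every T ≥ 0,
½∫|u(T)|² + Re⁻¹∫₀ᵀ∫|curl u|² = ½∫|u(0)|², and in particular
∫|u(T)|² ≤ ∫|u(0)|². -/
theorem navier_stokes_energy_balance (Re : ℝ) (hRe : 0 < Re)
    (u : ℝ → R3 → R3) (pt : ℝ → R3 → ℝ)
    (hu : ContDiff ℝ 2 (Function.uncurry u))
    (hp : ContDiff ℝ 1 (Function.uncurry pt))
    (hmom : ∀ t : ℝ, ∀ x ∈ cube,
      dtv u t x - cross3 (u t x) (vcurl (u t) x) + Re⁻¹ • vcurl (vcurl (u t)) x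
        + vgrad (fun y => (1 / 2) * dot3 (u t y) (u t y) + pt t y) x = 0)
    (hdiv : ∀ t : ℝ, ∀ x ∈ cube, vdiv (u t) x = 0)
    (hbcu : ∀ t : ℝ, TangentialBC (u t))
    (hbcp : ∀ t : ℝ, ∀ x : R3, onBdry x →
      (1 / 2) * dot3 (u t x) (u t x) + pt t x = 0) :
    (∀ T : ℝ, 0 ≤ T →
      (1 / 2) * (∫ x in cube, dot3 (u T x) (u T x))
        + Re⁻¹ * ∫ t in (0 : ℝ)..T, ∫ x in cube, dot3 (vcurl (u t) x) (vcurl (u t) x)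
        = (1 / 2) * ∫ x in cube, dot3 (u 0 x) (u 0 x))
    ∧ (∀ T : ℝ, 0 ≤ T →
      (∫ x in cube, dot3 (u T x) (u T x)) ≤ ∫ x in cube, dot3 (u 0 x) (u 0 x)) := by
  have hu₁ : ContDiff ℝ 1 (uncurry u) := hu.of_le one_le_two
  have hP (t : ℝ) : ContDiff ℝ 1 fun y => (1 / 2) * dot3 (u t y) (u t y) + pt t y := by
    have := hu₁.uncurry_left t
    have := hp.uncurry_left t
    fun_prop
  have hdissipation (t : ℝ) : ∫ x in cube, dot3 (u t x) (dtv u t x)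
      = -Re⁻¹ * ∫ x in cube, dot3 (vcurl (u t) x) (vcurl (u t) x) := by
    rw [← integral_dot3_cross3_curl_sub_eq Re⁻¹ (hu.uncurry_left t) (hP t) (hdiv t) (hbcu t)
      (hbcp t)]
    refine setIntegral_congr_fun isCompact_cube.measurableSet fun x hx => ?_
    congr 1
    rw [← sub_eq_zero, ← hmom t x hx]
    abel
  have henergy (t : ℝ) : HasDerivAt (fun t => ∫ x in cube, dot3 (u t x) (u t x))
      (2 * (-Re⁻¹ * ∫ x in cube, dot3 (vcurl (u t) x) (vcurl (u t) x))) t := by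
    rw [← hdissipation]
    exact hasDerivAt_integral_dot3_self hu₁ isCompact_cube t
  have hbalance (T : ℝ) : (1 / 2) * (∫ x in cube, dot3 (u T x) (u T x))
      + Re⁻¹ * ∫ t in (0 : ℝ)..T, ∫ x in cube, dot3 (vcurl (u t) x) (vcurl (u t) x)
      = (1 / 2) * ∫ x in cube, dot3 (u 0 x) (u 0 x) := by
    have hω := continuous_vcurl_slice hu₁
    have hD := continuous_parametric_integral_of_continuous (μ := volume)
      (f := fun t x => dot3 (vcurl (u t) x) (vcurl (u t) x)) (hω.dot3 hω) isCompact_cube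
    have := intervalIntegral.integral_eq_sub_of_hasDerivAt (fun t _ => henergy t)
      ((continuous_const.mul (continuous_const.mul hD)).intervalIntegrable 0 T)
    rw [intervalIntegral.integral_const_mul, intervalIntegral.integral_const_mul] at this
    linear_combination (-1 / 2) * this
  refine ⟨fun T _ => hbalance T, fun T hT => ?_⟩
  have hdissipated :
      0 ≤ Re⁻¹ * ∫ t in (0 : ℝ)..T, ∫ x in cube, dot3 (vcurl (u t) x) (vcurl (u t) x) :=
    mul_nonneg (inv_nonneg.2 hRe.le) <| intervalIntegral.integral_nonneg hT fun t _ =>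
      setIntegral_nonneg isCompact_cube.measurableSet fun x _ => dot3_self_nonneg _
  linarith [hbalance T]
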